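/- For n ≥ 3 and k ≥ 2, the rank of the direct power (S_n)^k equals k. -/

import Mathlib

/-!
The sign map sends `(Sₙ)ᵏ` onto `(ℤˣ)ᵏ`, and a group of exponent `2` generated by `r` elements has
at most `2 ^ r` elements, so at least `k` generators are needed.

Conversely, take an even `u` and an odd involution `τ` generating `Sₙ` such that `⁅τ, u²⁆` is a
3-cycle (an `n`-cycle and a transposition for odd `n`, an `(n-1)`-cycle and a transposition for
even `n`), and let `xᵢ` be `u` in every coordinate except the `i`-th, where it is `τ`. Since
`τ² = 1`, the commutator `⁅xⱼ, xᵢ²⁆` is that 3-cycle in coordinate `j` and trivial elsewhere.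
The subgroup generated by the `xᵢ` projects onto every factor, so conjugating gives all 3-cycles,
hence `Aₙ`, in each coordinate; as the signs of the `xᵢ` form the standard basis of `(ℤˣ)ᵏ`, the
`xᵢ` generate everything.
-/

open Subgroup

/-- Minimal length of a word over `X` (positive letters only) representing `g`. -/
noncomputable def wLen {G : Type*} [Group G] (X : Set G) (g : G) : ℕ :=
  sInf {n | ∃ l : List G, (∀ x ∈ l, x ∈ X) ∧ l.length = n ∧ l.prod = g}

/-- Minimal length of a word over `X ∪ X⁻¹` representing `g`. -/
noncomputable def sLen {G : Type*} [Group G] (X : Set G) (g : G) : ℕ :=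
  sInf {n | ∃ l : List G, (∀ x ∈ l, x ∈ X ∨ x⁻¹ ∈ X) ∧ l.length = n ∧ l.prod = g}

/-- Diameter of `G` with respect to `X` (positive words). -/
noncomputable def diamW (G : Type*) [Group G] (X : Set G) : ℕ :=
  sSup (Set.range (wLen X))

/-- Symmetric diameter of `G` with respect to `X`. -/
noncomputable def diamS (G : Type*) [Group G] (X : Set G) : ℕ :=
  sSup (Set.range (sLen X))

/-- Maximum diameter over all generating sets. -/
noncomputable def DW (G : Type*) [Group G] : ℕ :=
  sSup {d | ∃ X : Set G, Subgroup.closure X = ⊤ ∧ d = diamW G X}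

/-- Maximum symmetric diameter over all generating sets. -/
noncomputable def DS (G : Type*) [Group G] : ℕ :=
  sSup {d | ∃ X : Set G, Subgroup.closure X = ⊤ ∧ d = diamS G X}

/-- Minimal size of a generating set of `G`. -/
noncomputable def rk (G : Type*) [Group G] : ℕ :=
  sInf {n | ∃ S : Finset G, S.card = n ∧ Subgroup.closure (S : Set G) = ⊤}

open Equiv Equiv.Perm Subgroup Function
open scoped commutatorElement

lemma rk_eq_rank (G : Type*) [Group G] [Group.FG G] : rk G = Group.rank G := by
  obtain ⟨S, hcard, hS⟩ := Group.rank_spec G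
  refine le_antisymm (Nat.sInf_le ⟨S, hcard, hS⟩) ?_
  obtain ⟨T, hT, hTtop⟩ := Nat.sInf_mem (⟨_, S, hcard, hS⟩ :
    {n | ∃ S : Finset G, S.card = n ∧ closure (S : Set G) = ⊤}.Nonempty)
  exact (Group.rank_le hTtop).trans_eq hT

section PiGroup

variable {ι : Type*} [DecidableEq ι]

lemma normal_comap_mulSingle {G : ι → Type*} [∀ i, Group (G i)] {H : Subgroup (∀ i, G i)}
    {j : ι} (hj : H.map (Pi.evalMonoidHom G j) = ⊤) :
    (H.comap (MonoidHom.mulSingle G j)).Normal where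
  conj_mem a ha g := by
    obtain ⟨h, hH, rfl⟩ : g ∈ H.map (Pi.evalMonoidHom G j) := hj ▸ mem_top g
    have hconj : Pi.mulSingle j (h j * a * (h j)⁻¹) = h * Pi.mulSingle j a * h⁻¹ := by
      funext l
      by_cases hl : l = j
      · subst hl; simp
      · simp [Pi.mulSingle_eq_of_ne hl]
    simpa [hconj] using H.mul_mem (H.mul_mem hH ha) (H.inv_mem hH)

variable {G : Type*} [Group G]

lemma map_eval_closure_range_update_eq_top [Nontrivial ι] {u τ : G}
    (hgen : closure {u, τ} = ⊤) (j : ι) :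
    (closure (Set.range fun i => update (const ι u) i τ)).map (Pi.evalMonoidHom _ j) = ⊤ := by
  rw [MonoidHom.map_closure, eq_top_iff, ← hgen, closure_le]
  obtain ⟨i, hij⟩ := exists_ne j
  rintro g (rfl | rfl)
  · exact subset_closure ⟨_, ⟨i, rfl⟩, update_of_ne hij.symm _ _⟩
  · exact subset_closure ⟨_, ⟨j, rfl⟩, update_self _ _ _⟩

lemma mulSingle_commutatorElement_mem_closure {u τ : G} (hτ : τ ^ 2 = 1) {i j : ι}
    (hij : i ≠ j) :
    Pi.mulSingle j ⁅τ, u ^ 2⁆ ∈ closure (Set.range fun i => update (const ι u) i τ) := by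
  set x := fun i => update (const ι u) i τ
  have hx : ∀ i, x i ∈ closure (Set.range x) := fun i => subset_closure ⟨i, rfl⟩
  have hcomm : Pi.mulSingle j ⁅τ, u ^ 2⁆ = ⁅x j, x i ^ 2⁆ := by
    funext l
    change _ = ⁅x j l, x i l ^ 2⁆
    by_cases hlj : l = j
    · subst hlj; simp [x, update_of_ne hij.symm]
    · by_cases hli : l = i
      · subst hli; simp [x, hlj, hτ]
      · simpa [x, hlj, hli] using
          (commutatorElement_eq_one_iff_commute.2 (Commute.self_pow u 2)).symm
  rw [hcomm, commutatorElement_def]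
  exact mul_mem (mul_mem (mul_mem (hx j) (pow_mem (hx i) 2)) (inv_mem (hx j)))
    (inv_mem (pow_mem (hx i) 2))

end PiGroup

namespace Equiv.Perm

variable {α : Type*} [DecidableEq α]

lemma commutatorElement_swap (σ : Perm α) (x y : α) :
    ⁅swap x y, σ⁆ = swap x y * swap (σ x) (σ y) := by
  rw [commutatorElement_def, swap_inv, swap_apply_apply]
  group

variable [Fintype α]

lemma IsThreeCycle.alternatingGroup_le {w : Perm α} (hw : IsThreeCycle w) {K : Subgroup (Perm α)}
    [K.Normal] (hwK : w ∈ K) : alternatingGroup α ≤ K := by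
  rw [← closure_three_cycles_eq_alternating, closure_le]
  intro σ hσ
  obtain ⟨c, rfl⟩ := isConj_iff.1 (isConj_of_cycleType_eq (hw.trans hσ.symm))
  exact Normal.conj_mem ‹_› w hwK c

lemma card_le_rank_pi (ι : Type*) [Finite ι] [Nontrivial α] :
    Nat.card ι ≤ Group.rank (ι → Perm α) := by
  have hsign : Surjective (MonoidHom.compLeft (sign : Perm α →* ℤˣ) ι) :=
    (sign_surjective α).comp_left
  have hdvd := card_dvd_exponent_pow_rank' (ι → ℤˣ) (n := 2) fun g =>
    funext fun i => Int.units_sq (g i)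
  rw [Nat.card_fun, Nat.card_eq_fintype_card, Fintype.card_units_int,
    Nat.pow_dvd_pow_iff_le_right one_lt_two] at hdvd
  exact hdvd.trans (Group.rank_le_of_surjective _ hsign)

structure IsPowerGeneratingPair (u τ : Perm α) : Prop where
  closure_eq_top : closure {u, τ} = ⊤
  sq_eq_one : τ ^ 2 = 1
  sign_left : sign u = 1
  sign_right : sign τ = -1
  isThreeCycle : IsThreeCycle ⁅τ, u ^ 2⁆

theorem IsPowerGeneratingPair.closure_range_update_eq_top {u τ : Perm α}
    (h : IsPowerGeneratingPair u τ) (ι : Type*) [DecidableEq ι] [Finite ι] [Nontrivial ι] :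
    closure (Set.range fun i => update (const ι u) i τ) = ⊤ := by
  set H := closure (Set.range fun i => update (const ι u) i τ)
  have hx : ∀ i, update (const ι u) i τ ∈ H := fun i => subset_closure ⟨i, rfl⟩
  have halt (j : ι) : alternatingGroup α ≤ H.comap (MonoidHom.mulSingle _ j) := by
    have := normal_comap_mulSingle (map_eval_closure_range_update_eq_top h.closure_eq_top j)
    obtain ⟨i, hij⟩ := exists_ne j
    exact h.isThreeCycle.alternatingGroup_le
      (mulSingle_commutatorElement_mem_closure h.sq_eq_one hij)
  have hker : (MonoidHom.compLeft sign ι).ker ≤ H := fun g hg =>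
    pi_mem_of_mulSingle_mem g fun j => halt j (mem_alternatingGroup.2 (congrFun hg j))
  have hmap : H.map (MonoidHom.compLeft sign ι) = ⊤ := by
    refine eq_top_iff.2 fun v _ => pi_mem_of_mulSingle_mem v fun j => ?_
    rcases Int.units_eq_one_or (v j) with h1 | h1
    · simp [h1]
    · refine ⟨_, hx j, funext fun l => ?_⟩
      by_cases hl : l = j
      · subst hl; simp [h1, h.sign_right]
      · simp [hl, h.sign_left]
  rw [← comap_map_eq_self hker, hmap, comap_top]

lemma IsCycle.pow_apply_ne_self {c : Perm α} (hc : IsCycle c) {x : α} (hx : c x ≠ x) {j : ℕ}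
    (hj : ¬ c.support.card ∣ j) : (c ^ j) x ≠ x := fun h =>
  hj (hc.orderOf ▸ orderOf_dvd_of_pow_eq_one ((hc.pow_eq_one_iff' hx).2 h))

section FullCycle

variable {c : Perm α}

lemma isPowerGeneratingPair_of_odd (hc : IsCycle c) (hsupp : c.support = Finset.univ)
    (hodd : Odd (Fintype.card α)) (h3 : 3 ≤ Fintype.card α) (x : α) :
    IsPowerGeneratingPair c (swap x ((c ^ 2) x)) := by
  have hn : c.support.card = Fintype.card α := by rw [hsupp, Finset.card_univ]
  have hne (y : α) {j : ℕ} (hj : ¬ Fintype.card α ∣ j) : (c ^ j) y ≠ y :=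
    hc.pow_apply_ne_self (mem_support.1 (hsupp ▸ Finset.mem_univ y)) (hn ▸ hj)
  have h2 : ¬ Fintype.card α ∣ 2 := fun h => by have := Nat.le_of_dvd two_pos h; omega
  have h4 : ¬ Fintype.card α ∣ 4 := fun h => by
    have := Nat.Coprime.eq_one_of_dvd ((Nat.coprime_two_right.2 hodd).pow_right 2) h
    omega
  set b := (c ^ 2) x
  have hb : (c ^ 2) b = (c ^ 4) x := by rw [← mul_apply, ← pow_add]
  refine ⟨?_, by rw [sq, swap_mul_self], ?_, sign_swap (hne x h2).symm, ?_⟩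
  · exact closure_cycle_coprime_swap (Nat.coprime_two_left.2 hodd) hc hsupp x
  · rw [hc.sign, hn, hodd.neg_one_pow, neg_neg]
  · rw [commutatorElement_swap, swap_comm]
    exact isThreeCycle_swap_mul_swap_same (hne x h2) (hne b h2).symm (hb ▸ (hne x h4).symm)

lemma isPowerGeneratingPair_of_even (hc : IsCycle c) (hsupp : c.support = Finset.univ)
    (heven : Even (Fintype.card α)) (h4 : 4 ≤ Fintype.card α) (x : α) :
    IsPowerGeneratingPair (c * swap x (c x)) (swap x (c x)) := by
  have hn : c.support.card = Fintype.card α := by rw [hsupp, Finset.card_univ]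
  have hne (y : α) {j : ℕ} (hj0 : 0 < j) (hj : j < 4) : (c ^ j) y ≠ y :=
    hc.pow_apply_ne_self (mem_support.1 (hsupp ▸ Finset.mem_univ y))
      (hn ▸ fun h => absurd (Nat.le_of_dvd hj0 h) (by omega))
  have hne1 (y : α) : c y ≠ y := by simpa using hne y one_pos (by norm_num)
  have hne2 (y : α) : c (c y) ≠ y := by simpa [sq] using hne y two_pos (by norm_num)
  have hne3 (y : α) : c (c (c y)) ≠ y := hne y three_pos (by norm_num)
  set u := c * swap x (c x)
  have hu_cx : u (c x) = c x := by simp [u]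
  have hu_x : u x = c (c x) := by simp [u]
  have hu_ccx : u (c (c x)) = c (c (c x)) := by
    simp [u, swap_apply_of_ne_of_ne (hne2 x) (hne1 (c x))]
  refine ⟨?_, by rw [sq, swap_mul_self], ?_, sign_swap (hne1 x).symm, ?_⟩
  · rw [eq_top_iff, ← closure_cycle_adjacent_swap hc hsupp x, closure_le]
    have hτ : swap x (c x) ∈ closure {u, swap x (c x)} := subset_closure (by simp)
    have hcmem : c ∈ closure {u, swap x (c x)} := by
      convert mul_mem (subset_closure (Set.mem_insert u _)) hτ using 1
      exact (mul_swap_mul_self x (c x) c).symm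
    simp [Set.insert_subset_iff, hcmem, hτ]
  · rw [sign_mul, hc.sign, hn, sign_swap (hne1 x).symm, heven.neg_one_pow]
    rfl
  · simp only [commutatorElement_swap, sq, mul_apply, hu_x, hu_ccx, hu_cx]
    rw [swap_comm x, swap_comm _ (c x)]
    exact isThreeCycle_swap_mul_swap_same (hne1 x) (hne2 (c x)).symm (hne3 x).symm

lemma exists_isPowerGeneratingPair (hc : IsCycle c) (hsupp : c.support = Finset.univ)
    (h3 : 3 ≤ Fintype.card α) :
    ∃ u τ : Perm α, IsPowerGeneratingPair u τ := by
  obtain ⟨x⟩ : Nonempty α := Fintype.card_pos_iff.1 (by omega)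
  rcases Nat.even_or_odd (Fintype.card α) with heven | hodd
  · have h4 : 4 ≤ Fintype.card α := by obtain ⟨r, hr⟩ := heven; omega
    exact ⟨_, _, isPowerGeneratingPair_of_even hc hsupp heven h4 x⟩
  · exact ⟨_, _, isPowerGeneratingPair_of_odd hc hsupp hodd h3 x⟩

end FullCycle

end Equiv.Perm

theorem stmt8 (n k : ℕ) (hn : 3 ≤ n) (hk : 2 ≤ k) :
    rk (Fin k → Equiv.Perm (Fin n)) = k := by
  have : Nontrivial (Fin k) := Fin.nontrivial_iff_two_le.2 hk
  have : Nontrivial (Fin n) := Fin.nontrivial_iff_two_le.2 (by omega)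
  obtain ⟨u, τ, h⟩ := exists_isPowerGeneratingPair (isCycle_finRotate_of_le (n := n) (by omega))
    (support_finRotate_of_le (by omega)) (by simpa using hn)
  rw [rk_eq_rank]
  refine le_antisymm ?_ (by simpa using card_le_rank_pi (α := Fin n) (Fin k))
  calc Group.rank _
      ≤ (Finset.univ.image fun i => update (const (Fin k) u) i τ).card :=
        Group.rank_le (by simpa using h.closure_range_update_eq_top (Fin k))
    _ ≤ k := Finset.card_image_le.trans (by simp)
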